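/- arXiv:1310.5403 — 2 statements merged into one kernel-verified Lean document; each statement's English description precedes it below -/
import Mathlib

section
/- Let m ≤ m' be positive integers, let p ∈ 𝔽₂[x] be an irreducible polynomial with deg(p) = m', and let r, c ∈ 𝔽₂[x] with p not dividing r. Then the number of q ∈ G_{m'} such that r·q + c ≡ a (mod p) for some a ∈ 𝔽₂[x] with deg(a) < m'−m is at most 2^{m'−m}. -/
open scoped BigOperators

attribute [local instance] Classical.propDecidable

noncomputable section

/-- `mu α k` is μ_α(k): with k = 2^{a_1−1} + ⋯ + 2^{a_v−1}, a_1 > ⋯ > a_v > 0, the sum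
a_1 + ⋯ + a_{min(α,v)}; μ_α(0) = 0. -/
def mu (α k : ℕ) : ℕ :=
  (((((List.range (k+1)).filter (fun i => k.testBit i)).reverse).take α).map (· + 1)).sum

/-- The set E of positive integers with even binary sum-of-digits. -/
def Eset : Set ℕ := {k | 1 ≤ k ∧ Even ((Nat.digits 2 k).sum)}

/-- tr_{m'}(k) = κ_0 + κ_1 x + ⋯ + κ_{m'−1} x^{m'−1} ∈ 𝔽₂[x]. -/
def trunc (m' k : ℕ) : Polynomial (ZMod 2) :=
  ∑ i ∈ Finset.range m', Polynomial.monomial i (if k.testBit i then 1 else 0)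

/-- The polynomial n(x) ∈ 𝔽₂[x] associated to n ∈ ℕ via its binary digits. -/
def nPoly (n : ℕ) : Polynomial (ZMod 2) := trunc (n+1) n

/-- C_1 = 1/2, C_τ = 2^{−τ}(5/3)^{τ−2} for τ ≥ 2. -/
def Cconst (τ : ℕ) : ℝ := if τ = 1 then 1/2 else (2:ℝ)^(-(τ:ℝ)) * (5/3:ℝ)^((τ:ℝ)-2)

/-- C'_{α,ν} = Σ_{τ=ν}^{α} C_τ² 2^{−2(τ−ν)}. -/
def Cprime (α ν : ℕ) : ℝ :=
  ∑ τ ∈ Finset.Icc ν α, (Cconst τ)^2 * (2:ℝ)^(-(2:ℝ)*((τ:ℝ)-(ν:ℝ)))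

/-- C̃_{2α} = 2^{−2α+1}(5/3)^{2α−2}. -/
def Ctilde (α : ℕ) : ℝ := (2:ℝ)^(-(2:ℝ)*(α:ℝ)+1) * (5/3:ℝ)^(2*(α:ℝ)-2)

/-- D_α = max_{1≤ν≤α} (C'_{α,ν} + C̃_{2α} 2^{−2(α−ν)}). -/
def Dconst (α : ℕ) : ℝ :=
  sSup {x : ℝ | ∃ ν, 1 ≤ ν ∧ ν ≤ α ∧
    x = Cprime α ν + Ctilde α * (2:ℝ)^(-(2:ℝ)*((α:ℝ)-(ν:ℝ)))}

/-- A_{α,λ,1}. -/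
def A1 (α : ℕ) (lam : ℝ) : ℝ :=
  (∑ v ∈ Finset.Icc 1 (α-1), ∏ i ∈ Finset.Icc 1 v, (1 / ((2:ℝ)^(2*lam*(i:ℝ)) - 1)))
  + (1/((2:ℝ)^(2*lam*(α:ℝ)) - 2)) * ∏ i ∈ Finset.Icc 1 (α-1), 1/((2:ℝ)^(2*lam*(i:ℝ)) - 1)

/-- A_{α,λ,2}. -/
def A2 (α : ℕ) (lam : ℝ) : ℝ :=
  (∑ v ∈ Finset.Icc 1 ((α-1)/2), ∏ i ∈ Finset.Icc 1 (2*v),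
      ((2:ℝ)^(2*lam) / ((2:ℝ)^(2*lam*(i:ℝ)) - 1)))
  + ((2:ℝ)^(2*lam)/((2:ℝ)^(2*lam*(α:ℝ)) - 2)) *
      ∏ i ∈ Finset.Icc 1 (α-1), (2:ℝ)^(2*lam)/((2:ℝ)^(2*lam*(i:ℝ)) - 1)

/-- Membership of a d-dimensional frequency vector k in the dual polynomial lattice
D^⊥(q,p): tr_{m'}(k_1)q_1 + ⋯ + tr_{m'}(k_d)q_d ≡ a (mod p) with deg(a) < m'−m. -/
def inDual (m m' d : ℕ) (q : ℕ → Polynomial (ZMod 2)) (p : Polynomial (ZMod 2))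
    (k : ℕ → ℕ) : Prop :=
  ∃ a : Polynomial (ZMod 2), a.degree < ((m' - m : ℕ) : WithBot ℕ) ∧
    p ∣ ((∑ j ∈ Finset.range d, trunc m' (k j) * q j) - a)

/-- The inner sum Σ_{k_u ∈ E^{|u|}, (k_u,0) ∈ D^⊥(q,p)} ∏_{j∈u} 2^{−2μ_α(⌊k_j/2⌋)}
(in dimension d). -/
def dualSum (m m' α d : ℕ) (q : ℕ → Polynomial (ZMod 2)) (p : Polynomial (ZMod 2))
    (u : Finset ℕ) : ℝ :=
  ∑' k : (↥u → ℕ),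
    if (∀ j, (k j) ∈ Eset) ∧
        inDual m m' d q p (fun j => if h : j ∈ u then k ⟨j, h⟩ else 0)
    then ∏ j, (2:ℝ)^(-(2:ℝ) * (mu α (k j / 2) : ℝ)) else 0

/-- The quality criterion B_{α,γ}(q,p) in dimension d (coordinates indexed 0,…,d−1). -/
def Bcrit (d m m' α : ℕ) (γ : Finset ℕ → ℝ) (q : ℕ → Polynomial (ZMod 2))
    (p : Polynomial (ZMod 2)) : ℝ :=
  ∑ u ∈ (Finset.range d).powerset.filter (· ≠ ∅),
    γ u * Dconst α ^ u.card * dualSum m m' α d q p u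

/-- ξ_i digit of the dyadic rational x = l/2^{m'} (with ξ_i = 0 for i > m'). -/
def xi (m' l i : ℕ) : ℕ := if 1 ≤ i ∧ i ≤ m' ∧ l.testBit (m' - i) then 1 else 0

/-- Walsh function value wal_k(l/2^{m'}) = (−1)^{ξ_1κ_0 + ξ_2κ_1 + ⋯}. -/
def wal (m' l k : ℕ) : ℝ :=
  (-1:ℝ) ^ (∑ i ∈ Finset.range (k+1), (if k.testBit i then xi m' l (i+1) else 0))

/-- ω_α(l/2^{m'}) = Σ_{k∈E} 2^{−2μ_α(⌊k/2⌋)} wal_k(l/2^{m'}). -/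
def omega (α m' l : ℕ) : ℝ :=
  ∑' k : ↥Eset, (2:ℝ)^(-(2:ℝ) * (mu α ((k:ℕ)/2) : ℝ)) * wal m' l (k:ℕ)

/-- The numerator L ∈ {0,…,2^{m'}−1} such that v_{m'}(f/p) = L/2^{m'}: the l-th binary
digit t_l of v_{m'}(f/p) is the constant coefficient of (f·x^l) div p. -/
def vnum (m' : ℕ) (f p : Polynomial (ZMod 2)) : ℕ :=
  ∑ l ∈ Finset.Icc 1 m', (if ((f * Polynomial.X ^ l) / p).coeff 0 = 1 then 2^(m' - l) else 0)

/-- The polynomial in G_{m'} with coefficient vector c. -/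
def polyOf {n : ℕ} (c : Fin n → ZMod 2) : Polynomial (ZMod 2) :=
  ∑ i : Fin n, Polynomial.monomial (i : ℕ) (c i)

/-- Strictly decreasing v-tuples of positive integers a_1 > ⋯ > a_v > 0. -/
def decTuples (v : ℕ) : Type := {a : Fin v → ℕ // StrictAnti a ∧ ∀ i, 0 < a i}

end

open Polynomial

theorem Polynomial.eq_of_prime_dvd_mul_sub {R : Type*} [CommRing R] [IsDomain R]
    {p r q₁ q₂ : R[X]} (hp : Prime p) (hr : ¬ p ∣ r) (h₁ : q₁.degree < p.degree)
    (h₂ : q₂.degree < p.degree) (h : p ∣ r * (q₁ - q₂)) : q₁ = q₂ :=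
  sub_eq_zero.1 <| eq_zero_of_dvd_of_degree_lt ((hp.dvd_mul.1 h).resolve_left hr)
    ((degree_sub_le _ _).trans_lt (max_lt h₁ h₂))

/-- Since `q ↦ r * q + c` is injective modulo `p` on polynomials of degree `< deg p`,
distinct `Q i` in the set have distinct witnesses `a`, and there are `|R| ^ n` candidates. -/
theorem Polynomial.card_filter_exists_dvd_sub_le {R ι : Type*} [CommRing R] [IsDomain R]
    [Fintype R] [Fintype ι] {p r : R[X]} (hp : Prime p) (hr : ¬ p ∣ r) (Q : ι → R[X])
    (hQ : Function.Injective Q) (hQdeg : ∀ i, (Q i).degree < p.degree) (c : R[X]) (n : ℕ) :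
    (Finset.univ.filter fun i => ∃ a : R[X], a.degree < n ∧ p ∣ r * Q i + c - a).card ≤
      Fintype.card R ^ n := by
  set S := Finset.univ.filter fun i => ∃ a : R[X], a.degree < n ∧ p ∣ r * Q i + c - a
  have hS (i : S) : ∃ a : degreeLT R n, p ∣ r * Q i + c - a := by
    obtain ⟨a, ha, hdvd⟩ := (Finset.mem_filter.1 i.2).2
    exact ⟨⟨a, mem_degreeLT.2 ha⟩, hdvd⟩
  choose g hg using hS
  have hg_inj : Function.Injective g := fun i j hij => by
    have hdvd := dvd_sub (hg i) (hg j)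
    rw [hij] at hdvd
    refine Subtype.ext (hQ (eq_of_prime_dvd_mul_sub hp hr (hQdeg _) (hQdeg _) ?_))
    convert hdvd using 1
    ring
  calc S.card = Fintype.card S := (Fintype.card_coe S).symm
    _ ≤ Fintype.card (Fin n → R) :=
      Fintype.card_le_of_injective _ ((degreeLTEquiv R n).injective.comp hg_inj)
    _ = Fintype.card R ^ n := by simp

theorem polyOf_eq_degreeLTEquiv_symm {n : ℕ} (co : Fin n → ZMod 2) :
    polyOf co = (degreeLTEquiv (ZMod 2) n).symm co :=
  rfl

theorem polyOf_injective (n : ℕ) : Function.Injective (polyOf (n := n)) := fun co₁ co₂ h => by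
  rw [polyOf_eq_degreeLTEquiv_symm, polyOf_eq_degreeLTEquiv_symm] at h
  exact (degreeLTEquiv (ZMod 2) n).symm.injective (Subtype.ext h)

theorem degree_polyOf_lt {n : ℕ} (co : Fin n → ZMod 2) : (polyOf co).degree < n := by
  rw [polyOf_eq_degreeLTEquiv_symm, ← mem_degreeLT]
  exact Subtype.property _

theorem stmt6_general (m m' : ℕ)
    (p : Polynomial (ZMod 2)) (hp : Irreducible p) (hdeg : p.natDegree = m')
    (r c : Polynomial (ZMod 2)) (hr : ¬ p ∣ r) :
    (Finset.univ.filter (fun co : Fin m' → ZMod 2 =>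
      ∃ a : Polynomial (ZMod 2), a.degree < ((m' - m : ℕ) : WithBot ℕ) ∧
        p ∣ (r * polyOf co + c - a))).card ≤ 2^(m'-m) := by
  have hpdeg : p.degree = m' := by rw [degree_eq_natDegree hp.ne_zero, hdeg]
  simpa using card_filter_exists_dvd_sub_le hp.prime hr polyOf (polyOf_injective m')
    (fun co => hpdeg ▸ degree_polyOf_lt co) c (m' - m)

/-- with p not dividing r, at most 2^{m'−m} polynomials q ∈ G_{m'}
(parametrized by coefficient vectors) satisfy r·q + c ≡ a (mod p) with deg(a) < m'−m. -/
theorem stmt6 (m m' : ℕ) (hm : 0 < m) (hmm : m ≤ m')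
    (p : Polynomial (ZMod 2)) (hp : Irreducible p) (hdeg : p.natDegree = m')
    (r c : Polynomial (ZMod 2)) (hr : ¬ p ∣ r) :
    (Finset.univ.filter (fun co : Fin m' → ZMod 2 =>
      ∃ a : Polynomial (ZMod 2), a.degree < ((m' - m : ℕ) : WithBot ℕ) ∧
        p ∣ (r * polyOf co + c - a))).card ≤ 2^(m'-m) :=
  stmt6_general m m' p hp hdeg r c hr
end

section
/- Let s, m, m' be positive integers with m ≤ m', let α ≥ 2 be an integer, let γ = (γ_u)_{u⊆{1,…,s}} be non-negative real weights, let p ∈ 𝔽₂[x] with deg(p) = m', and let q = (q_1,…,q_s) ∈ 𝔽₂[x]^s. Let x_{n,j} = v_{m'}(n q_j / p) for 0 ≤ n < 2^m and 1 ≤ j ≤ s, where the integer n is identified with the polynomial n(x) = n_0 + n_1 x + ⋯ ∈ 𝔽₂[x] via its binary digits n = n_0 + n_1·2 + ⋯. Then B_{α,γ}(q,p) = 2^{−m} Σ_{n=0}^{2^m−1} Σ_{∅≠u⊆{1,…,s}} γ_u D_α^{|u|} ∏_{j∈u} ω_α(x_{n,j}). -/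
open scoped BigOperators

attribute [local instance] Classical.propDecidable

/-!
For `f ∈ 𝔽₂[x]` the binary digits of `v_{m'}(f/p)` are the Laurent digits `t_l(f)` of `f/p`, so
`wal_k(v_{m'}(f/p)) = (-1)^{t_1(f · tr_{m'}(k))}`, and `t_1` is additive in `f`. Hence, with
`F = Σ_j tr_{m'}(k_j) q_j`, the product `∏_j wal_{k_j}(x_{n,j})` equals
`(-1)^{t_1(n(x) F)} = (-1)^{Σ_b n_b t_{b+1}(F)}`, whose average over `n < 2^m` is `1` if
`t_1(F) = ⋯ = t_m(F) = 0` and `0` otherwise. The first `m` Laurent digits of `F/p` vanish exactly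
when `F ≡ a (mod p)` with `deg a < m' - m`, i.e. when `(k, 0) ∈ D^⊥(q, p)`. Expanding the product of
the absolutely convergent series `ω_α` and exchanging it with the finite average gives the formula.
-/

open Polynomial

namespace Polynomial

variable {R : Type*} [CommRing R] {p : R[X]}

theorem divByMonic_add (hp : p.Monic) (f g : R[X]) : (f + g) /ₘ p = f /ₘ p + g /ₘ p := by
  apply hp.isRegular.left
  have hmod : (f + g) %ₘ p = f %ₘ p + g %ₘ p := map_add (modByMonicHom p) f g
  linear_combination modByMonic_add_div (f + g) p - modByMonic_add_div f p -
    modByMonic_add_div g p - hmod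

theorem mul_X_pow_divByMonic (hp : p.Monic) (g : R[X]) (k : ℕ) :
    (g * X ^ k) /ₘ p = g /ₘ p * X ^ k + (g %ₘ p * X ^ k) /ₘ p := by
  conv_lhs => rw [← modByMonic_add_div g p]
  rw [add_mul, divByMonic_add hp, mul_assoc, mul_divByMonic_cancel_left _ hp, add_comm]

theorem degree_mul_X_pow_divByMonic_lt [Nontrivial R] (hp : p.Monic) {r : R[X]}
    (hr : r.degree < p.degree) (k : ℕ) : ((r * X ^ k) /ₘ p).degree < k := by
  rcases eq_or_ne r 0 with rfl | hr0
  · simp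
  rcases Nat.eq_zero_or_pos k with rfl | hk
  · simp [(divByMonic_eq_zero_iff hp).2 hr]
  have hlt : r.natDegree < p.natDegree := natDegree_lt_natDegree hr0 hr
  refine degree_le_natDegree.trans_lt (Nat.cast_lt.2 ?_)
  rw [natDegree_divByMonic _ hp, natDegree_mul_X_pow _ hr0]
  omega

theorem mul_X_pow_divByMonic_eq_zero_iff [Nontrivial R] (hp : p.Monic) (r : R[X]) (m : ℕ) :
    (r * X ^ m) /ₘ p = 0 ↔ r.degree < ↑(p.natDegree - m) := by
  rw [divByMonic_eq_zero_iff hp, degree_eq_natDegree hp.ne_zero]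
  rcases eq_or_ne r 0 with rfl | hr0
  · simp
  rw [degree_eq_natDegree ((monic_X_pow m).mul_left_ne_zero hr0), degree_eq_natDegree hr0,
    natDegree_mul_X_pow _ hr0, Nat.cast_lt, Nat.cast_lt]
  omega

theorem monic_of_ne_zero_of_zmod_two {p : (ZMod 2)[X]} (hp : p ≠ 0) : p.Monic := by
  obtain h | h : p.leadingCoeff = 0 ∨ p.leadingCoeff = 1 := by
    generalize p.leadingCoeff = c; revert c; decide
  · exact absurd (leadingCoeff_eq_zero.1 h) hp
  · exact h

end Polynomial

section LaurentDigits

variable {R : Type*} [CommRing R] {p : R[X]}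

/-- The digit `t_l`, i.e. the coefficient of `x^{-l}` in the Laurent expansion of `f / p`. -/
noncomputable def laurentDigit (p f : R[X]) (l : ℕ) : R := ((f * X ^ l) /ₘ p).coeff 0

theorem laurentDigit_add (hp : p.Monic) (f g : R[X]) (l : ℕ) :
    laurentDigit p (f + g) l = laurentDigit p f l + laurentDigit p g l := by
  rw [laurentDigit, add_mul, divByMonic_add hp, coeff_add, laurentDigit, laurentDigit]

theorem laurentDigit_zero (p : R[X]) (l : ℕ) : laurentDigit p 0 l = 0 := by
  rw [laurentDigit, zero_mul, zero_divByMonic, coeff_zero]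

theorem laurentDigit_sum (hp : p.Monic) {ι : Type*} (s : Finset ι) (F : ι → R[X]) (l : ℕ) :
    laurentDigit p (∑ i ∈ s, F i) l = ∑ i ∈ s, laurentDigit p (F i) l :=
  map_sum (AddMonoidHom.mk' (laurentDigit p · l) (laurentDigit_add hp · · l)) F s

theorem laurentDigit_mul_X_pow (f : R[X]) (i l : ℕ) :
    laurentDigit p (f * X ^ i) l = laurentDigit p f (i + l) := by
  rw [laurentDigit, laurentDigit, mul_assoc, ← pow_add]

theorem laurentDigit_modByMonic (hp : p.Monic) (f : R[X]) {l : ℕ} (hl : 1 ≤ l) :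
    laurentDigit p (f %ₘ p) l = laurentDigit p f l := by
  have hmul : laurentDigit p (p * (f /ₘ p)) l = 0 := by
    rw [laurentDigit, mul_assoc, mul_divByMonic_cancel_left _ hp, coeff_mul_X_pow',
      if_neg (by omega)]
  conv_rhs => rw [← modByMonic_add_div f p]
  rw [laurentDigit_add hp, hmul, add_zero]

theorem coeff_mul_X_pow_divByMonic [Nontrivial R] (hp : p.Monic) (f : R[X]) {l M : ℕ}
    (hl : l ≤ M) : ((f * X ^ M) /ₘ p).coeff (M - l) = laurentDigit p f l := by
  obtain ⟨k, rfl⟩ := Nat.exists_eq_add_of_le hl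
  rw [Nat.add_sub_cancel_left, pow_add, ← mul_assoc, mul_X_pow_divByMonic hp, coeff_add,
    coeff_mul_X_pow', if_pos le_rfl, Nat.sub_self, laurentDigit,
    coeff_eq_zero_of_degree_lt (degree_mul_X_pow_divByMonic_lt hp (degree_modByMonic_lt _ hp) k),
    add_zero]

theorem exists_dvd_sub_iff_degree_modByMonic_lt [Nontrivial R] (hp : p.Monic) (F : R[X])
    {e : ℕ} (he : e ≤ p.natDegree) :
    (∃ a : R[X], a.degree < e ∧ p ∣ F - a) ↔ (F %ₘ p).degree < e := by
  refine ⟨fun ⟨a, ha, hdvd⟩ => ?_, fun h => ⟨F %ₘ p, h, ?_⟩⟩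
  · have ha' : a.degree < p.degree :=
      ha.trans_le (by rw [degree_eq_natDegree hp.ne_zero]; exact_mod_cast he)
    rwa [modByMonic_eq_of_dvd_sub hp hdvd, (modByMonic_eq_self_iff hp).2 ha']
  · exact ⟨F /ₘ p, by linear_combination (modByMonic_add_div F p).symm⟩

theorem laurentDigit_eq_zero_iff [Nontrivial R] (hp : p.Monic) (F : R[X]) (m : ℕ) :
    (∀ b < m, laurentDigit p F (b + 1) = 0) ↔
      ∃ a : R[X], a.degree < ↑(p.natDegree - m) ∧ p ∣ F - a := by
  rw [exists_dvd_sub_iff_degree_modByMonic_lt hp F (Nat.sub_le _ _),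
    ← mul_X_pow_divByMonic_eq_zero_iff hp]
  set Q := (F %ₘ p * X ^ m) /ₘ p
  have hQ : Q.degree < m := degree_mul_X_pow_divByMonic_lt hp (degree_modByMonic_lt F hp) m
  have hcoeff : ∀ j < m, Q.coeff j = laurentDigit p F (m - j) := fun j hj => by
    rw [← laurentDigit_modByMonic hp F (by omega), ← coeff_mul_X_pow_divByMonic hp _
      (Nat.sub_le m j), Nat.sub_sub_self hj.le]
  constructor
  · intro h
    ext j
    rcases lt_or_ge j m with hj | hj
    · rw [hcoeff j hj, coeff_zero]
      obtain ⟨b, hb⟩ : ∃ b, m - j = b + 1 := ⟨m - j - 1, by omega⟩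
      rw [hb]
      exact h b (by omega)
    · exact coeff_eq_zero_of_degree_lt (hQ.trans_le (by exact_mod_cast hj))
  · intro h b hb
    have := hcoeff (m - (b + 1)) (by omega)
    rwa [h, coeff_zero, Nat.sub_sub_self (by omega), eq_comm] at this

end LaurentDigits

section SignCharacter

theorem AddChar.map_sum_eq_prod {A M ι : Type*} [AddCommMonoid A] [CommMonoid M]
    (ψ : AddChar A M) (s : Finset ι) (f : ι → A) : ψ (∑ i ∈ s, f i) = ∏ i ∈ s, ψ (f i) := by
  classical
  induction s using Finset.induction_on with
  | empty => simp
  | insert i s hi ih => rw [Finset.sum_insert hi, Finset.prod_insert hi, map_add_eq_mul, ih]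

noncomputable abbrev signChar : AddChar (ZMod 2) ℝ :=
  AddChar.zmodChar 2 (by norm_num : (-1 : ℝ) ^ 2 = 1)

theorem neg_one_pow_eq_signChar (n : ℕ) : (-1 : ℝ) ^ n = signChar n :=
  (AddChar.zmodChar_apply' _ n).symm

theorem one_add_signChar (c : ZMod 2) : 1 + signChar c = if c = 0 then 2 else 0 := by
  obtain rfl | rfl : c = 0 ∨ c = 1 := by revert c; decide
  · norm_num
  · have h := neg_one_pow_eq_signChar 1
    rw [Nat.cast_one, pow_one] at h
    norm_num [← h]

theorem sum_range_two_pow_signChar_eq_prod (M : ℕ) (c : ℕ → ZMod 2) :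
    ∑ n ∈ Finset.range (2 ^ M), signChar (∑ b ∈ Finset.range M, if n.testBit b then c b else 0)
      = ∏ b ∈ Finset.range M, (1 + signChar (c b)) := by
  induction M with
  | zero => simp
  | succ M ih =>
    have hlow : ∀ n < 2 ^ M, (∑ b ∈ Finset.range (M + 1), if n.testBit b then c b else 0)
        = ∑ b ∈ Finset.range M, if n.testBit b then c b else 0 := fun n hn => by
      rw [Finset.sum_range_succ, Nat.testBit_lt_two_pow hn, if_neg Bool.false_ne_true, add_zero]
    have hhigh : ∀ n < 2 ^ M, (∑ b ∈ Finset.range (M + 1), if (2 ^ M + n).testBit b then c b else 0)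
        = (∑ b ∈ Finset.range M, if n.testBit b then c b else 0) + c M := fun n hn => by
      rw [Finset.sum_range_succ, Nat.testBit_two_pow_add_eq, Nat.testBit_lt_two_pow hn]
      congr 1
      exact Finset.sum_congr rfl fun b hb =>
        by rw [Nat.testBit_two_pow_add_gt (Finset.mem_range.1 hb)]
    rw [pow_succ, mul_two, Finset.sum_range_add,
      Finset.sum_congr rfl fun n hn => congrArg signChar (hlow n (Finset.mem_range.1 hn)),
      Finset.sum_congr rfl fun n hn => congrArg signChar (hhigh n (Finset.mem_range.1 hn))]
    simp only [AddChar.map_add_eq_mul]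
    rw [← Finset.sum_mul, ih, Finset.prod_range_succ]
    ring

theorem sum_range_two_pow_signChar (M : ℕ) (c : ℕ → ZMod 2) :
    ∑ n ∈ Finset.range (2 ^ M), signChar (∑ b ∈ Finset.range M, if n.testBit b then c b else 0)
      = if ∀ b < M, c b = 0 then 2 ^ M else 0 := by
  simp_rw [sum_range_two_pow_signChar_eq_prod, one_add_signChar, Finset.prod_ite_zero,
    Finset.prod_const, Finset.card_range, Finset.mem_range]

end SignCharacter

section WalshFunctions

theorem Nat.testBit_sum_two_pow (s : Finset ℕ) (b : ℕ) :
    (∑ i ∈ s, 2 ^ i).testBit b = decide (b ∈ s) := by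
  have h : b ∈ s ↔ (∑ i ∈ s, 2 ^ i).testBit b := by
    conv_lhs => rw [← Finset.toFinset_bitIndices_sum_two_pow s]
    rw [List.mem_toFinset, Nat.mem_bitIndices]
  by_cases hb : b ∈ s <;> simp_all

theorem trunc_eq_sum_ite (M k : ℕ) :
    trunc M k = ∑ i ∈ Finset.range M, if k.testBit i then X ^ i else 0 :=
  Finset.sum_congr rfl fun i _ => by split_ifs <;> simp [X_pow_eq_monomial]

theorem trunc_zero_right (M : ℕ) : trunc M 0 = 0 := by
  simp [trunc_eq_sum_ite]

theorem trunc_add_of_lt {M k : ℕ} (hk : k < 2 ^ M) (j : ℕ) : trunc (M + j) k = trunc M k := by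
  rw [trunc_eq_sum_ite, trunc_eq_sum_ite, Finset.sum_range_add, add_eq_left]
  refine Finset.sum_eq_zero fun i _ => if_neg ?_
  rw [Nat.testBit_lt_two_pow (hk.trans_le (Nat.pow_le_pow_right two_pos (Nat.le_add_right M i)))]
  exact Bool.false_ne_true

theorem nPoly_eq_trunc {M n : ℕ} (hn : n < 2 ^ M) : nPoly n = trunc M n := by
  have hn' : n < 2 ^ (n + 1) := Nat.lt_two_pow_self.trans (Nat.pow_lt_pow_succ one_lt_two)
  rw [nPoly, ← trunc_add_of_lt hn (n + 1), ← trunc_add_of_lt hn' M, add_comm]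

variable {p : (ZMod 2)[X]}

theorem laurentDigit_mul_trunc (hp : p.Monic) (f : (ZMod 2)[X]) (M k : ℕ) :
    laurentDigit p (f * trunc M k) 1
      = ∑ i ∈ Finset.range M, if k.testBit i then laurentDigit p f (i + 1) else 0 := by
  rw [trunc_eq_sum_ite, Finset.mul_sum, laurentDigit_sum hp]
  refine Finset.sum_congr rfl fun i _ => ?_
  split_ifs
  · rw [laurentDigit_mul_X_pow]
  · rw [mul_zero, laurentDigit_zero]

theorem vnum_eq_sum_two_pow (hp : p.Monic) (m' : ℕ) (f : (ZMod 2)[X]) :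
    vnum m' f p
      = ∑ i ∈ (Finset.range m').filter (fun i => laurentDigit p f (m' - i) = 1), 2 ^ i := by
  rw [Finset.sum_filter, vnum]
  refine Finset.sum_nbij' (fun l => m' - l) (fun i => m' - i) ?_ ?_ ?_ ?_ fun l hl => ?_
  any_goals intro l hl; simp only [Finset.mem_Icc, Finset.mem_range] at hl ⊢; omega
  rw [Nat.sub_sub_self (Finset.mem_Icc.1 hl).2, laurentDigit, divByMonic_eq_div _ hp]

theorem natCast_xi_vnum (hp : p.Monic) {m' : ℕ} (f : (ZMod 2)[X]) (i : ℕ) :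
    ((xi m' (vnum m' f p) (i + 1) : ℕ) : ZMod 2)
      = if i < m' then laurentDigit p f (i + 1) else 0 := by
  rw [xi, vnum_eq_sum_two_pow hp, Nat.testBit_sum_two_pow]
  by_cases hi : i < m'
  · have hsub : m' - (m' - (i + 1)) = i + 1 := by omega
    obtain h | h : laurentDigit p f (i + 1) = 0 ∨ laurentDigit p f (i + 1) = 1 := by
      generalize laurentDigit p f (i + 1) = t; revert t; decide
    all_goals simp [hi, hsub, h, Nat.lt_iff_add_one_le.1 hi, show m' - (i + 1) < m' by omega]
  · simp [hi, show ¬ i + 1 ≤ m' by omega]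

theorem wal_vnum (hp : p.Monic) (m' : ℕ) (f : (ZMod 2)[X]) (k : ℕ) :
    wal m' (vnum m' f p) k = signChar (laurentDigit p (f * trunc m' k) 1) := by
  rw [wal, neg_one_pow_eq_signChar, laurentDigit_mul_trunc hp]
  congr 1
  push_cast [Nat.cast_sum, Nat.cast_ite]
  simp_rw [natCast_xi_vnum hp]
  have hk : ∀ i, k + 1 ≤ i → k.testBit i = false := fun i hi =>
    Nat.testBit_lt_two_pow (Nat.lt_two_pow_self.trans_le (Nat.pow_le_pow_right two_pos (by omega)))
  rw [Finset.sum_subset (Finset.range_subset_range.2 (Nat.le_add_right (k + 1) m')) ?_,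
    ← Finset.sum_subset (Finset.range_subset_range.2 (Nat.le_add_left m' (k + 1))) ?_]
  · exact Finset.sum_congr rfl fun i hi => by simp [Finset.mem_range.1 hi]
  all_goals intro i _ hi
  all_goals simp only [Finset.mem_range, not_lt] at hi
  · simp [hi]
  · simp [hk i hi]

theorem sum_range_prod_wal_vnum (hp : p.Monic) (m m' : ℕ) {ι : Type*} (u : Finset ι)
    (q : ι → (ZMod 2)[X]) (k : ι → ℕ) :
    ∑ n ∈ Finset.range (2 ^ m), ∏ j ∈ u, wal m' (vnum m' (nPoly n * q j) p) (k j)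
      = if ∀ b < m, laurentDigit p (∑ j ∈ u, trunc m' (k j) * q j) (b + 1) = 0
        then 2 ^ m else 0 := by
  set F := ∑ j ∈ u, trunc m' (k j) * q j
  have hprod : ∀ n ∈ Finset.range (2 ^ m),
      ∏ j ∈ u, wal m' (vnum m' (nPoly n * q j) p) (k j)
        = signChar (∑ b ∈ Finset.range m, if n.testBit b then laurentDigit p F (b + 1) else 0) := by
    intro n hn
    have hF : F * nPoly n = ∑ j ∈ u, nPoly n * q j * trunc m' (k j) := by
      rw [Finset.sum_mul]
      exact Finset.sum_congr rfl fun j _ => by ring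
    simp_rw [wal_vnum hp, ← AddChar.map_sum_eq_prod, ← laurentDigit_sum hp,
      ← laurentDigit_mul_trunc hp F m n, ← nPoly_eq_trunc (Finset.mem_range.1 hn), hF]
  rw [Finset.sum_congr rfl hprod, sum_range_two_pow_signChar]

end WalshFunctions

section Weights

noncomputable def muWeight (α k : ℕ) : ℝ := (2 : ℝ) ^ (-(2 : ℝ) * (mu α (k / 2) : ℝ))

theorem log_add_one_le_mu {α n : ℕ} (hα : 1 ≤ α) (hn : n ≠ 0) : n.log2 + 1 ≤ mu α n := by
  set g := n.log2
  have hbits : (List.range (n + 1)).filter (fun i => n.testBit i)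
      = (List.range g).filter (fun i => n.testBit i) ++ [g] := by
    have hg : g ≤ n := Nat.log2_le_self n
    have hhigh : ((List.range (n - g)).map (g + 1 + ·)).filter (fun i => n.testBit i) = [] :=
      List.filter_eq_nil_iff.2 fun i hi => by
        obtain ⟨x, -, rfl⟩ := List.mem_map.1 hi
        rw [Nat.testBit_lt_two_pow ((Nat.lt_log2_self).trans_le
          (Nat.pow_le_pow_right two_pos (by omega)))]
        exact Bool.false_ne_true
    rw [show n + 1 = g + 1 + (n - g) by omega, List.range_add, List.filter_append, hhigh,
      List.append_nil, List.range_succ, List.filter_append]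
    simp [g, Nat.testBit_log2 hn]
  obtain ⟨α, rfl⟩ := Nat.exists_eq_add_of_le' hα
  simp [mu, hbits]

theorem lt_two_pow_mu {α : ℕ} (hα : 1 ≤ α) (n : ℕ) : n < 2 ^ mu α n := by
  rcases eq_or_ne n 0 with rfl | hn
  · exact Nat.two_pow_pos _
  exact Nat.lt_log2_self.trans_le (Nat.pow_le_pow_right two_pos (log_add_one_le_mu hα hn))

theorem muWeight_nonneg (α k : ℕ) : 0 ≤ muWeight α k := by
  unfold muWeight
  positivity

theorem muWeight_le {α k : ℕ} (hα : 1 ≤ α) (hk : k ≠ 0) :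
    muWeight α k ≤ 4 * ((k : ℝ) ^ 2)⁻¹ := by
  set P := 2 ^ mu α (k / 2)
  have hkP : (k : ℝ) ≤ 2 * P := by
    have := lt_two_pow_mu hα (k / 2)
    exact_mod_cast (by omega : k ≤ 2 * P)
  have hw : muWeight α k = ((P : ℝ) ^ 2)⁻¹ := by
    rw [muWeight, show -(2 : ℝ) * (mu α (k / 2) : ℝ) = -((mu α (k / 2) * 2 : ℕ) : ℝ) by
      push_cast; ring, Real.rpow_neg zero_le_two, Real.rpow_natCast, pow_mul]
    push_cast [P]
    rfl
  have hk0 : (0 : ℝ) < k := by positivity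
  rw [hw, ← div_eq_mul_inv, inv_eq_one_div, div_le_div_iff₀ (by positivity) (by positivity)]
  nlinarith

theorem summable_muWeight {α : ℕ} (hα : 1 ≤ α) : Summable fun k : Eset => muWeight α k :=
  Summable.of_nonneg_of_le (fun k => muWeight_nonneg α k)
    (fun k => muWeight_le hα (Nat.one_le_iff_ne_zero.1 k.2.1))
    (((Real.summable_nat_pow_inv.2 one_lt_two).mul_left 4).comp_injective Subtype.coe_injective)

end Weights

section ProductOfSums

variable {R : Type*} [NormedCommRing R] [CompleteSpace R] {κ : Type*}

theorem summable_norm_and_hasSum_prod_fin (n : ℕ) (f : Fin n → κ → R)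
    (hf : ∀ i, Summable fun k => ‖f i k‖) :
    (Summable fun g : Fin n → κ => ‖∏ i, f i (g i)‖) ∧
      HasSum (fun g : Fin n → κ => ∏ i, f i (g i)) (∏ i, ∑' k, f i k) := by
  induction n with
  | zero => exact ⟨Summable.of_finite, by simp⟩
  | succ n ih =>
    obtain ⟨ihS, ihH⟩ := ih (fun i => f i.succ) (fun i => hf i.succ)
    let e := Fin.consEquiv fun _ : Fin (n + 1) => κ
    have hprod : ∀ z, ∏ i, f i (e z i) = f 0 z.1 * ∏ i : Fin n, f i.succ (z.2 i) := fun z => by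
      simp only [e, Fin.consEquiv, Equiv.coe_fn_mk, Fin.prod_univ_succ, Fin.cons_zero,
        Fin.cons_succ]
    have hS : Summable fun z : κ × (Fin n → κ) => ‖f 0 z.1 * ∏ i : Fin n, f i.succ (z.2 i)‖ :=
      Summable.mul_norm (f := f 0) (g := fun g : Fin n → κ => ∏ i : Fin n, f i.succ (g i))
        (hf 0) ihS
    refine ⟨?_, ?_⟩
    · rw [← e.summable_iff]
      simpa only [Function.comp_def, hprod] using hS
    · rw [← e.hasSum_iff]
      simp only [Function.comp_def, hprod]
      rw [Fin.prod_univ_succ, ← ihH.tsum_eq, tsum_mul_tsum_of_summable_norm (hf 0) ihS]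
      exact hS.of_norm.hasSum

theorem hasSum_prod_of_summable_norm {ι : Type*} [Fintype ι] (f : ι → κ → R)
    (hf : ∀ i, Summable fun k => ‖f i k‖) :
    HasSum (fun g : ι → κ => ∏ i, f i (g i)) (∏ i, ∑' k, f i k) := by
  let e := Fintype.equivFin ι
  have h := (summable_norm_and_hasSum_prod_fin _ (fun j => f (e.symm j)) (fun j => hf _)).2
  rw [← e.symm.prod_comp fun i => ∑' k, f i k, ← (e.arrowCongr (Equiv.refl κ)).symm.hasSum_iff]
  convert h using 2 with g
  exact Fintype.prod_equiv e _ _ fun i => by simp [Equiv.arrowCongr]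

end ProductOfSums

section DualSum

variable {p : (ZMod 2)[X]} {m m' s : ℕ}

theorem sum_range_trunc_extend_mul (q : ℕ → (ZMod 2)[X]) {u : Finset ℕ}
    (hu : u ⊆ Finset.range s) (k : u → ℕ) :
    ∑ j ∈ Finset.range s, trunc m' (if h : j ∈ u then k ⟨j, h⟩ else 0) * q j
      = ∑ j : u, trunc m' (k j) * q j := by
  rw [← Finset.sum_subset hu fun j _ hj => by simp [hj, trunc_zero_right], ← Finset.sum_coe_sort u]
  exact Finset.sum_congr rfl fun j _ => by simp

theorem inDual_extend_iff (hp : p.Monic) (hd : p.natDegree = m') (q : ℕ → (ZMod 2)[X])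
    {u : Finset ℕ} (hu : u ⊆ Finset.range s) (k : u → ℕ) :
    inDual m m' s q p (fun j => if h : j ∈ u then k ⟨j, h⟩ else 0) ↔
      ∀ b < m, laurentDigit p (∑ j : u, trunc m' (k j) * q j) (b + 1) = 0 := by
  rw [inDual, sum_range_trunc_extend_mul q hu, laurentDigit_eq_zero_iff hp, hd]

theorem dualSum_eq_average {α : ℕ} (hα : 1 ≤ α) (hp : p.Monic) (hd : p.natDegree = m')
    (q : ℕ → (ZMod 2)[X]) {u : Finset ℕ} (hu : u ⊆ Finset.range s) :
    dualSum m m' α s q p u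
      = 1 / 2 ^ m *
          ∑ n ∈ Finset.range (2 ^ m), ∏ j ∈ u, omega α m' (vnum m' (nPoly n * q j) p) := by
  set D : (u → Eset) → Prop := fun g =>
    inDual m m' s q p (fun j => if h : j ∈ u then (g ⟨j, h⟩ : ℕ) else 0)
  have hrestrict : dualSum m m' α s q p u
      = ∑' g : u → Eset, if D g then ∏ j, muWeight α (g j) else 0 := by
    have hinj : Function.Injective fun (g : u → Eset) j => (g j : ℕ) :=
      fun g g' h => funext fun j => Subtype.ext (congrFun h j)
    rw [dualSum, ← hinj.tsum_eq]
    · exact tsum_congr fun g => by simp [D, muWeight, fun j => (g j).2]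
    · intro k hk
      by_cases hE : ∀ j, k j ∈ Eset
      · exact ⟨fun j => ⟨k j, hE j⟩, rfl⟩
      · exact absurd (if_neg fun h => hE h.1) hk
  have hterm : ∀ n, HasSum
      (fun g : u → Eset => ∏ j, muWeight α (g j) * wal m' (vnum m' (nPoly n * q j) p) (g j))
      (∏ j ∈ u, omega α m' (vnum m' (nPoly n * q j) p)) := fun n => by
    have homega : ∀ l, omega α m' l = ∑' k : Eset, muWeight α k * wal m' l k := fun l => rfl
    simp_rw [← Finset.prod_coe_sort u, homega]
    refine hasSum_prod_of_summable_norm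
      (fun (j : u) (k : Eset) => muWeight α k * wal m' (vnum m' (nPoly n * q j) p) k)
      fun j => (summable_muWeight hα).congr fun k => ?_
    rw [norm_mul, Real.norm_of_nonneg (muWeight_nonneg α k), Real.norm_eq_abs, wal, abs_pow,
      abs_neg, abs_one, one_pow, mul_one]
  have hsum := (hasSum_sum fun n (_ : n ∈ Finset.range (2 ^ m)) => hterm n).mul_left (1 / 2 ^ m)
  rw [hrestrict, ← hsum.tsum_eq]
  refine tsum_congr fun g => ?_
  simp_rw [Finset.prod_mul_distrib, ← Finset.mul_sum]
  have hD : D g ↔ _ := inDual_extend_iff hp hd q hu fun j => (g j : ℕ)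
  rw [sum_range_prod_wal_vnum hp]
  simp only [hD]
  split_ifs
  · field_simp
  · simp

end DualSum

theorem stmt15_general (s m m' α : ℕ) (hm : 0 < m) (hmm : m ≤ m') (hα : 2 ≤ α)
    (γ : Finset ℕ → ℝ)
    (p : Polynomial (ZMod 2)) (hdeg : p.natDegree = m')
    (q : ℕ → Polynomial (ZMod 2)) :
    Bcrit s m m' α γ q p
      = (1/(2:ℝ)^m) * ∑ n ∈ Finset.range (2^m),
          ∑ u ∈ (Finset.range s).powerset.filter (· ≠ ∅),
            γ u * Dconst α ^ u.card *
              ∏ j ∈ u, omega α m' (vnum m' (nPoly n * q j) p) := by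
  have hp : p.Monic := monic_of_ne_zero_of_zmod_two (ne_zero_of_natDegree_gt (n := 0) (by omega))
  rw [Bcrit, Finset.sum_comm, Finset.mul_sum]
  refine Finset.sum_congr rfl fun u hu => ?_
  rw [dualSum_eq_average (by omega) hp hdeg q (Finset.mem_powerset.1 (Finset.mem_filter.1 hu).1),
    Finset.mul_sum, Finset.mul_sum, Finset.mul_sum]
  exact Finset.sum_congr rfl fun n _ => by ring

/-- B_{α,γ}(q,p) = 2^{−m} Σ_{n<2^m} Σ_{∅≠u} γ_u D_α^{|u|} ∏_{j∈u} ω_α(x_{n,j}). -/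
theorem stmt15 (s m m' α : ℕ) (hs : 0 < s) (hm : 0 < m) (hmm : m ≤ m') (hα : 2 ≤ α)
    (γ : Finset ℕ → ℝ) (hγ : ∀ u, 0 ≤ γ u)
    (p : Polynomial (ZMod 2)) (hdeg : p.natDegree = m')
    (q : ℕ → Polynomial (ZMod 2)) :
    Bcrit s m m' α γ q p
      = (1/(2:ℝ)^m) * ∑ n ∈ Finset.range (2^m),
          ∑ u ∈ (Finset.range s).powerset.filter (· ≠ ∅),
            γ u * Dconst α ^ u.card *
              ∏ j ∈ u, omega α m' (vnum m' (nPoly n * q j) p) :=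
  stmt15_general s m m' α hm hmm hα γ p hdeg q
end
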